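/- A regular AR-Finsler manifold (M,F) is Riemannian if and only if ∂̇_i log η = −(1/n)·a^{jk}·∂̇_i a_{jk} for all i. -/

import Mathlib

noncomputable def pd {n : ℕ} (i : Fin n) (f : (Fin n → ℝ) → ℝ) (y : Fin n → ℝ) : ℝ :=
  fderiv ℝ f y (Pi.single i 1)

/-!
Contracting the Cartan torsion `η ∂̇_i a_{jk} + a_{jk} ∂̇_i η` with `g^{jk} = a^{jk}/η` gives the
mean torsion `I_i = a^{jk} ∂̇_i a_{jk} + n ∂̇_i log η`, because `a^{jk} a_{jk} = n`. The stated
condition is exactly `I_i = 0`; a vanishing Cartan torsion has vanishing mean, and conversely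
Deicke's theorem recovers the Cartan torsion from its mean.
-/

open Finset

theorem pd_log {n : ℕ} (i : Fin n) {f : (Fin n → ℝ) → ℝ} {y : Fin n → ℝ}
    (hf : DifferentiableAt ℝ f y) (hfy : f y ≠ 0) :
    pd i (fun z => Real.log (f z)) y = pd i f y / f y := by
  have hlog : HasFDerivAt (fun z => Real.log (f z)) ((f y)⁻¹ • fderiv ℝ f y) y :=
    (Real.hasDerivAt_log hfy).comp_hasFDerivAt y hf.hasFDerivAt
  simp only [pd, hlog.fderiv, smul_apply, smul_eq_mul, inv_mul_eq_div]

/-- For a symmetric matrix `A` with right inverse `B`, `∑ B_{jk} A_{jk} = tr (A B) = card ι`. -/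
theorem sum_sum_mul_eq_card_of_symm {ι : Type*} [Fintype ι] [DecidableEq ι] {A B : ι → ι → ℝ}
    (hA : ∀ i j, A i j = A j i) (hAB : ∀ j k, ∑ i, A j i * B i k = if j = k then 1 else 0) :
    ∑ j, ∑ k, B j k * A j k = Fintype.card ι := by
  have hdiag : ∀ k, ∑ j, B j k * A j k = 1 := fun k => by
    simpa only [hA k, mul_comm, if_pos] using hAB k k
  rw [sum_comm]
  simp [hdiag]

theorem sum_sum_div_mul_add_mul {ι : Type*} [Fintype ι] (B D A : ι → ι → ℝ) {η : ℝ} (e : ℝ)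
    (hη : η ≠ 0) :
    ∑ j, ∑ k, (B j k / η) * (η * D j k + A j k * e)
      = ∑ j, ∑ k, B j k * D j k + e / η * ∑ j, ∑ k, B j k * A j k := by
  simp only [mul_sum, ← sum_add_distrib]
  refine sum_congr rfl fun j _ => sum_congr rfl fun k _ => ?_
  field_simp

theorem stmt7_general {n : ℕ} (hn : 0 < n) (U : Set (Fin n → ℝ))
    (η : (Fin n → ℝ) → ℝ) (a aInv : Fin n → Fin n → (Fin n → ℝ) → ℝ)
    (hη : ∀ y ∈ U, 0 < η y) (hηd : Differentiable ℝ η)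
    (hasym : ∀ i j, ∀ y ∈ U, a i j y = a j i y)
    (hInv : ∀ y ∈ U, ∀ j k, ∑ i, a j i y * aInv i k y = if j = k then (1:ℝ) else 0)
    (hDeicke : (∀ i, ∀ y ∈ U,
        ∑ j, ∑ k, (aInv j k y / η y) * (η y * pd i (a j k) y + a j k y * pd i η y) = 0) →
      ∀ i j k, ∀ y ∈ U, η y * pd i (a j k) y + a j k y * pd i η y = 0) :
    (∀ i j k, ∀ y ∈ U, η y * pd i (a j k) y + a j k y * pd i η y = 0) ↔
      (∀ i, ∀ y ∈ U,
        pd i (fun z => Real.log (η z)) y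
          = -(1 / (n : ℝ)) * ∑ j, ∑ k, aInv j k y * pd i (a j k) y) := by
  have hn' : (n : ℝ) ≠ 0 := Nat.cast_ne_zero.mpr hn.ne'
  have mean_torsion : ∀ i, ∀ y ∈ U,
      ∑ j, ∑ k, (aInv j k y / η y) * (η y * pd i (a j k) y + a j k y * pd i η y)
        = ∑ j, ∑ k, aInv j k y * pd i (a j k) y + n * pd i (fun z => Real.log (η z)) y := by
    intro i y hy
    rw [sum_sum_div_mul_add_mul _ _ _ _ (hη y hy).ne',
      sum_sum_mul_eq_card_of_symm (hasym · · y hy) (hInv y hy), Fintype.card_fin,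
      pd_log i (hηd y) (hη y hy).ne', mul_comm]
  constructor
  · intro hC i y hy
    have hI := mean_torsion i y hy
    simp only [hC i _ _ y hy, mul_zero, sum_const_zero] at hI
    field_simp
    linarith
  · intro hlog
    refine hDeicke fun i y hy => ?_
    rw [mean_torsion i y hy, hlog i y hy]
    field_simp
    ring

/-- A regular AR-Finsler manifold, with `g_{ij} = η a_{ij}` and Cartan torsion
`C_{ijk} = η ∂̇_i a_{jk} + a_{jk} ∂̇_i η` (up to a constant factor), is Riemannian
(i.e. `C_{ijk} ≡ 0`) if and only if `∂̇_i log η = −(1/n) a^{jk} ∂̇_i a_{jk}`.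
Regularity is used through Deicke's theorem: vanishing of the mean Cartan torsion
`I_i = g^{jk} C_{ijk}` implies vanishing of the Cartan torsion. -/
theorem stmt7 {n : ℕ} (hn : 0 < n) (U : Set (Fin n → ℝ)) (hU : IsOpen U)
    (η : (Fin n → ℝ) → ℝ) (a aInv : Fin n → Fin n → (Fin n → ℝ) → ℝ)
    (hη : ∀ y ∈ U, 0 < η y) (hηd : Differentiable ℝ η)
    (had : ∀ i j, Differentiable ℝ (a i j))
    (hasym : ∀ i j, ∀ y ∈ U, a i j y = a j i y)
    (hInv : ∀ y ∈ U, ∀ j k, ∑ i, a j i y * aInv i k y = if j = k then (1:ℝ) else 0)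
    (hDeicke : (∀ i, ∀ y ∈ U,
        ∑ j, ∑ k, (aInv j k y / η y) * (η y * pd i (a j k) y + a j k y * pd i η y) = 0) →
      ∀ i j k, ∀ y ∈ U, η y * pd i (a j k) y + a j k y * pd i η y = 0) :
    (∀ i j k, ∀ y ∈ U, η y * pd i (a j k) y + a j k y * pd i η y = 0) ↔
      (∀ i, ∀ y ∈ U,
        pd i (fun z => Real.log (η z)) y
          = -(1 / (n : ℝ)) * ∑ j, ∑ k, aInv j k y * pd i (a j k) y) :=
  stmt7_general hn U η a aInv hη hηd hasym hInv hDeicke
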